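/- arXiv:1508.04514 — 2 statements merged into one kernel-verified Lean document; each statement's English description precedes it below -/
import Mathlib

section
/- Let S be a real m×n matrix, G a real k×n matrix, and r a natural number. Let G⁺ denote the Moore–Penrose inverse of G, and let B be any best rank-r approximation of the matrix S·G⁺·G (in the Frobenius norm). Then for every real k×k matrix M, the matrix F = B·G⁺·(I + M·(I − G·G⁺)) has rank at most r and is a minimizer of the rank-constrained least squares problem: for every real m×k matrix F′ with rank F′ ≤ r one has ‖S − F·G‖_F ≤ ‖S − F′·G‖_F; moreover F·G = B·G⁺·G, so all matrices of this family attain the same minimal value. -/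
open Matrix

/-- Frobenius norm of a real matrix: square root of the sum of squares of entries. -/
noncomputable def frobNorm {m n : Type*} [Fintype m] [Fintype n] (A : Matrix m n ℝ) : ℝ :=
  Real.sqrt (∑ i, ∑ j, (A i j) ^ 2)

/-- The four Penrose equations characterizing the Moore–Penrose inverse. -/
def IsMoorePenrose {m n : Type*} [Fintype m] [Fintype n]
    (G : Matrix m n ℝ) (B : Matrix n m ℝ) : Prop :=
  G * B * G = G ∧ B * G * B = B ∧ (G * B)ᵀ = G * B ∧ (B * G)ᵀ = B * G

/-!
With `P = G⁺G`, the orthogonal projection onto the row space of `G`, every `F'G` satisfies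
`F'G P = F'G`, so by Pythagoras `‖S - F'G‖² = ‖S(1 - P)‖² + ‖SP - F'G‖²`, and `F'G` has
rank at most `r`. Since `FG = BP`, the same splitting gives
`‖S - FG‖² = ‖S(1 - P)‖² + ‖(SP - B)P‖² ≤ ‖S(1 - P)‖² + ‖SP - B‖²`, and `B` beats `F'G`
as an approximation of `SP`.
-/

lemma Matrix.transpose_eq_of_isSelfAdjoint {n : Type*} {P : Matrix n n ℝ} (hP : IsSelfAdjoint P) :
    Pᵀ = P := by
  rw [← conjTranspose_eq_transpose_of_trivial, ← star_eq_conjTranspose, hP.star_eq]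

section Frobenius

variable {m n : Type*} [Fintype m] [Fintype n]

lemma frobNorm_nonneg (A : Matrix m n ℝ) : 0 ≤ frobNorm A :=
  Real.sqrt_nonneg _

lemma frobNorm_sq_eq_trace (A : Matrix m n ℝ) : frobNorm A ^ 2 = trace (A * Aᵀ) := by
  rw [frobNorm, Real.sq_sqrt (by positivity)]
  simp [trace, mul_apply, sq]

lemma frobNorm_le_frobNorm_iff_sq {A C : Matrix m n ℝ} :
    frobNorm A ≤ frobNorm C ↔ frobNorm A ^ 2 ≤ frobNorm C ^ 2 :=
  (pow_le_pow_iff_left₀ (frobNorm_nonneg A) (frobNorm_nonneg C) two_ne_zero).symm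

lemma frobNorm_add_sq_of_trace_mul_transpose_eq_zero {X Y : Matrix m n ℝ}
    (h : trace (X * Yᵀ) = 0) :
    frobNorm (X + Y) ^ 2 = frobNorm X ^ 2 + frobNorm Y ^ 2 := by
  have h' : trace (Y * Xᵀ) = 0 := by
    rw [← trace_transpose, transpose_mul, transpose_transpose, h]
  simp only [frobNorm_sq_eq_trace, transpose_add, Matrix.add_mul, Matrix.mul_add, trace_add,
    h, h']
  ring

variable [DecidableEq n] {P : Matrix n n ℝ}

lemma frobNorm_sq_eq_mul_add_mul_one_sub (hP : IsStarProjection P) (X : Matrix m n ℝ) :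
    frobNorm X ^ 2 = frobNorm (X * P) ^ 2 + frobNorm (X * (1 - P)) ^ 2 := by
  rw [← frobNorm_add_sq_of_trace_mul_transpose_eq_zero, ← Matrix.mul_add, add_sub_cancel,
    Matrix.mul_one]
  rw [transpose_mul, transpose_eq_of_isSelfAdjoint hP.one_sub.isSelfAdjoint, Matrix.mul_assoc,
    ← Matrix.mul_assoc P, hP.mul_one_sub_self, Matrix.zero_mul, Matrix.mul_zero, trace_zero]

lemma frobNorm_mul_le (hP : IsStarProjection P) (X : Matrix m n ℝ) :
    frobNorm (X * P) ≤ frobNorm X := by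
  rw [frobNorm_le_frobNorm_iff_sq, frobNorm_sq_eq_mul_add_mul_one_sub hP X]
  exact le_add_of_nonneg_right (sq_nonneg _)

lemma frobNorm_sub_sq_of_mul_eq (hP : IsStarProjection P) (S : Matrix m n ℝ)
    {Z : Matrix m n ℝ} (hZ : Z * P = Z) :
    frobNorm (S - Z) ^ 2 = frobNorm (S * (1 - P)) ^ 2 + frobNorm (S * P - Z) ^ 2 := by
  have hZ' : Z * (1 - P) = 0 := by rw [Matrix.mul_sub, Matrix.mul_one, hZ, sub_self]
  rw [frobNorm_sq_eq_mul_add_mul_one_sub hP, Matrix.sub_mul, Matrix.sub_mul, hZ, hZ', sub_zero,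
    add_comm]

lemma frobNorm_sub_mul_le_of_le (hP : IsStarProjection P) {S B Z : Matrix m n ℝ}
    (hZ : Z * P = Z) (hB : frobNorm (S * P - B) ≤ frobNorm (S * P - Z)) :
    frobNorm (S - B * P) ≤ frobNorm (S - Z) := by
  have hBP : B * P * P = B * P := by rw [Matrix.mul_assoc, hP.isIdempotentElem.eq]
  have hproj : frobNorm (S * P - B * P) ≤ frobNorm (S * P - B) := by
    have h : S * P - B * P = (S * P - B) * P := by
      rw [Matrix.sub_mul, Matrix.mul_assoc, hP.isIdempotentElem.eq]
    exact h ▸ frobNorm_mul_le hP _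
  rw [frobNorm_le_frobNorm_iff_sq, frobNorm_sub_sq_of_mul_eq hP S hBP,
    frobNorm_sub_sq_of_mul_eq hP S hZ, add_le_add_iff_left, ← frobNorm_le_frobNorm_iff_sq]
  exact hproj.trans hB

end Frobenius

namespace IsMoorePenrose

variable {m n : Type*} [Fintype m] [Fintype n] {G : Matrix m n ℝ} {Gp : Matrix n m ℝ}

lemma isStarProjection_mul [DecidableEq n] (h : IsMoorePenrose G Gp) :
    IsStarProjection (Gp * G) where
  isIdempotentElem := by rw [IsIdempotentElem, ← Matrix.mul_assoc, h.2.1]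
  isSelfAdjoint := by
    rw [IsSelfAdjoint, star_eq_conjTranspose, conjTranspose_eq_transpose_of_trivial, h.2.2.2]

lemma mul_mul_self (h : IsMoorePenrose G Gp) : G * (Gp * G) = G := by
  rw [← Matrix.mul_assoc, h.1]

lemma one_sub_mul_mul_self [DecidableEq m] (h : IsMoorePenrose G Gp) :
    (1 - G * Gp) * G = 0 := by
  rw [Matrix.sub_mul, Matrix.one_mul, h.1, sub_self]

end IsMoorePenrose

theorem rank_constrained_least_squares_minimizer_family
    {m n k : ℕ} (S : Matrix (Fin m) (Fin n) ℝ) (G : Matrix (Fin k) (Fin n) ℝ)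
    (r : ℕ) (Gp : Matrix (Fin n) (Fin k) ℝ) (hGp : IsMoorePenrose G Gp)
    (B : Matrix (Fin m) (Fin n) ℝ)
    (hBrank : B.rank ≤ r)
    (hBbest : ∀ B' : Matrix (Fin m) (Fin n) ℝ, B'.rank ≤ r →
      frobNorm (S * Gp * G - B) ≤ frobNorm (S * Gp * G - B'))
    (M : Matrix (Fin k) (Fin k) ℝ) :
    (B * Gp * (1 + M * (1 - G * Gp))).rank ≤ r ∧
      (∀ F' : Matrix (Fin m) (Fin k) ℝ, F'.rank ≤ r →
        frobNorm (S - (B * Gp * (1 + M * (1 - G * Gp))) * G) ≤ frobNorm (S - F' * G)) ∧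
      (B * Gp * (1 + M * (1 - G * Gp))) * G = B * Gp * G := by
  have hFG : B * Gp * (1 + M * (1 - G * Gp)) * G = B * Gp * G := by
    rw [Matrix.mul_assoc, Matrix.add_mul, Matrix.one_mul, Matrix.mul_assoc M,
      hGp.one_sub_mul_mul_self, Matrix.mul_zero, add_zero]
  refine ⟨?_, fun F' hF' => ?_, hFG⟩
  · exact ((rank_mul_le_left _ _).trans (rank_mul_le_left _ _)).trans hBrank
  · have hF'G : F' * G * (Gp * G) = F' * G := by rw [Matrix.mul_assoc, hGp.mul_mul_self]
    have hbest := hBbest (F' * G) ((rank_mul_le_left _ _).trans hF')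
    rw [Matrix.mul_assoc S] at hbest
    rw [hFG, Matrix.mul_assoc B]
    exact frobNorm_sub_mul_le_of_le hGp.isStarProjection_mul hF'G hbest
end

section
/- Let (F^{(q)})_{q≥0} be an MBI sequence for the objective f(F₁,…,F_p) = ‖H − Σ_{j=1}^p F_j·G_j‖_F². If q₀ < q₁ < q₂ < … is a strictly increasing sequence of indices such that the subsequence F^{(q_s)} converges (entrywise) to a tuple F* = (F*₁,…,F*_p) as s → ∞, then F* is a coordinate-wise minimum point of f on the rank-constrained domain: for every index j, rank F*_j ≤ r_j and for every real m×n_j matrix X with rank X ≤ r_j one has f(F*₁,…,F*_p) ≤ f(F*₁,…,F*_{j−1}, X, F*_{j+1},…,F*_p). -/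
open Matrix

/-- The objective `f(F₁,…,F_p) = ‖H − Σ_j F_j G_j‖_F²`. -/
noncomputable def mbiObj {p m N : ℕ} (n : Fin p → ℕ)
    (H : Matrix (Fin m) (Fin N) ℝ)
    (G : ∀ j : Fin p, Matrix (Fin (n j)) (Fin N) ℝ)
    (F : ∀ j : Fin p, Matrix (Fin m) (Fin (n j)) ℝ) : ℝ :=
  (frobNorm (H - ∑ j, F j * G j)) ^ 2

/-- An MBI (maximum block improvement) sequence for the objective `mbiObj`:
every iterate satisfies the rank constraints, and each new iterate improves on
every single-block update of the previous iterate. -/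
def IsMBISequence {p m N : ℕ} (n r : Fin p → ℕ)
    (H : Matrix (Fin m) (Fin N) ℝ)
    (G : ∀ j : Fin p, Matrix (Fin (n j)) (Fin N) ℝ)
    (Fseq : ℕ → ∀ j : Fin p, Matrix (Fin m) (Fin (n j)) ℝ) : Prop :=
  (∀ q (j : Fin p), (Fseq q j).rank ≤ r j) ∧
    (∀ q (j : Fin p) (X : Matrix (Fin m) (Fin (n j)) ℝ), X.rank ≤ r j →
      mbiObj n H G (Fseq (q + 1)) ≤ mbiObj n H G (Function.update (Fseq q) j X))

open Filter Topology

/-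
The objective is continuous and, since an MBI step may keep every block fixed, nonincreasing along
the sequence. Hence `f(F^{(q_{s+1})}) ≤ f(F^{(q_s + 1)}) ≤ f(F^{(q_s)} with block j replaced by X)`,
and letting `s → ∞` gives `f(F*) ≤ f(F* with block j replaced by X)`. The rank bound passes to the
limit because rank `≥ r + 1` is an open condition (linear independence is).
-/

theorem Matrix.isClosed_setOf_rank_le {𝕜 : Type*} [NontriviallyNormedField 𝕜] [CompleteSpace 𝕜]
    {m n : Type*} [Fintype m] [Fintype n] (r : ℕ) :
    IsClosed {A : Matrix m n 𝕜 | A.rank ≤ r} := by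
  let toCLM : Matrix m n 𝕜 → (n → 𝕜) →L[𝕜] (m → 𝕜) :=
    fun A => LinearMap.toContinuousLinearMap A.mulVecLin
  have hcont : Continuous toCLM :=
    continuous_clm_apply.2 fun v => continuous_id.matrix_mulVec continuous_const
  have hset : {A : Matrix m n 𝕜 | A.rank ≤ r} =
      toCLM ⁻¹' {f | ↑(r + 1) ≤ (f : (n → 𝕜) →ₗ[𝕜] (m → 𝕜)).rank}ᶜ := by
    ext A
    simp only [Set.mem_ofPred_eq, Set.mem_preimage, Set.mem_compl_iff, not_le, Matrix.rank,
      LinearMap.rank, ← Module.finrank_eq_rank, Nat.cast_lt, Nat.lt_succ_iff]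
    rfl
  rw [hset]
  exact (isOpen_setOfPred_nat_le_rank (r + 1)).isClosed_compl.preimage hcont

theorem le_apply_map_of_tendsto_subseq {X α : Type*} [TopologicalSpace X] [TopologicalSpace α]
    [Preorder α] [OrderClosedTopology α] {f : X → α} {g : X → X} {u : ℕ → X} {q : ℕ → ℕ} {x : X}
    (hf : Continuous f) (hg : Continuous g) (hanti : Antitone (f ∘ u))
    (hstep : ∀ t, f (u (t + 1)) ≤ f (g (u t))) (hq : StrictMono q)
    (hlim : Tendsto (u ∘ q) atTop (𝓝 x)) : f x ≤ f (g x) := by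
  have hleft : Tendsto (fun s => f (u (q (s + 1)))) atTop (𝓝 (f x)) :=
    (hf.tendsto x).comp (hlim.comp (tendsto_add_atTop_nat 1))
  have hright : Tendsto (fun s => f (g (u (q s)))) atTop (𝓝 (f (g x))) :=
    ((hf.comp hg).tendsto x).comp hlim
  refine le_of_tendsto_of_tendsto' hleft hright fun s => ?_
  calc f (u (q (s + 1))) ≤ f (u (q s + 1)) := hanti (hq (Nat.lt_succ_self s))
    _ ≤ f (g (u (q s))) := hstep (q s)

theorem continuous_mbiObj {p m N : ℕ} (n : Fin p → ℕ) (H : Matrix (Fin m) (Fin N) ℝ)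
    (G : ∀ j : Fin p, Matrix (Fin (n j)) (Fin N) ℝ) :
    Continuous (mbiObj n H G) := by
  unfold mbiObj frobNorm
  fun_prop

theorem IsMBISequence.antitone {p m N : ℕ} {n r : Fin p → ℕ} {H : Matrix (Fin m) (Fin N) ℝ}
    {G : ∀ j : Fin p, Matrix (Fin (n j)) (Fin N) ℝ}
    {Fseq : ℕ → ∀ j : Fin p, Matrix (Fin m) (Fin (n j)) ℝ} (hMBI : IsMBISequence n r H G Fseq)
    (j : Fin p) : Antitone (mbiObj n H G ∘ Fseq) :=
  antitone_nat_of_succ_le fun t => by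
    simpa using hMBI.2 t j (Fseq t j) (hMBI.1 t j)

theorem mbi_subsequence_limit_is_coordinatewise_minimum_general
    {p m N : ℕ} (n r : Fin p → ℕ)
    (H : Matrix (Fin m) (Fin N) ℝ)
    (G : ∀ j : Fin p, Matrix (Fin (n j)) (Fin N) ℝ)
    (Fseq : ℕ → ∀ j : Fin p, Matrix (Fin m) (Fin (n j)) ℝ)
    (hMBI : IsMBISequence n r H G Fseq)
    (q : ℕ → ℕ) (hq : StrictMono q)
    (Fstar : ∀ j : Fin p, Matrix (Fin m) (Fin (n j)) ℝ)
    (hconv : ∀ (j : Fin p) (i : Fin m) (k : Fin (n j)),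
      Filter.Tendsto (fun s => Fseq (q s) j i k) Filter.atTop (nhds (Fstar j i k))) :
    ∀ j : Fin p, (Fstar j).rank ≤ r j ∧
      ∀ X : Matrix (Fin m) (Fin (n j)) ℝ, X.rank ≤ r j →
        mbiObj n H G Fstar ≤ mbiObj n H G (Function.update Fstar j X) := by
  have hlim : Tendsto (Fseq ∘ q) atTop (𝓝 Fstar) :=
    tendsto_pi_nhds.2 fun j => tendsto_pi_nhds.2 fun i => tendsto_pi_nhds.2 (hconv j i)
  intro j
  constructor
  · exact (Matrix.isClosed_setOf_rank_le (r j)).mem_of_tendsto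
      (((continuous_apply j).tendsto Fstar).comp hlim) (Eventually.of_forall fun s => hMBI.1 (q s) j)
  · intro X hX
    exact (le_apply_map_of_tendsto_subseq (continuous_mbiObj n H G)
      (continuous_id.update j continuous_const) (hMBI.antitone j) (fun t => hMBI.2 t j X hX) hq
      hlim :)

theorem mbi_subsequence_limit_is_coordinatewise_minimum
    {p m N : ℕ} (hp : 1 ≤ p) (n r : Fin p → ℕ)
    (H : Matrix (Fin m) (Fin N) ℝ)
    (G : ∀ j : Fin p, Matrix (Fin (n j)) (Fin N) ℝ)
    (Fseq : ℕ → ∀ j : Fin p, Matrix (Fin m) (Fin (n j)) ℝ)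
    (hMBI : IsMBISequence n r H G Fseq)
    (q : ℕ → ℕ) (hq : StrictMono q)
    (Fstar : ∀ j : Fin p, Matrix (Fin m) (Fin (n j)) ℝ)
    (hconv : ∀ (j : Fin p) (i : Fin m) (k : Fin (n j)),
      Filter.Tendsto (fun s => Fseq (q s) j i k) Filter.atTop (nhds (Fstar j i k))) :
    ∀ j : Fin p, (Fstar j).rank ≤ r j ∧
      ∀ X : Matrix (Fin m) (Fin (n j)) ℝ, X.rank ≤ r j →
        mbiObj n H G Fstar ≤ mbiObj n H G (Function.update Fstar j X) :=
  mbi_subsequence_limit_is_coordinatewise_minimum_general n r H G Fseq hMBI q hq Fstar hconv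
end
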